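/- Let d ≥ 1, s₁, s₂, ω₁, ω₂ ∈ ℝ. Suppose the tensor Θ: ℤ^d × ℤ^d × ℤ^d → ℂ satisfies ‖Θ‖_{ω₁,ω₂,N} := sup_{j,k,ℓ∈ℤ^d} |Θ(j,k,ℓ)| ⟨|j−k|+|j−ℓ|⟩^{2N} / (⟨|j|+|k|⟩^{ω₁} ⟨|j|+|ℓ|⟩^{ω₂}) < ∞ for some N > d + (1/2)(max(ω₁,0) + max(ω₂,0)) + (1/2)(|s₁+ω₁| + |s₂+ω₂|). Then 𝒯_Θ is a bounded bilinear operator from ℓ^p_{s₁+ω₁}(ℤ^d) × ℓ^q_{s₂+ω₂}(ℤ^d) to ℓ^r_{s₁+s₂}(ℤ^d) for any 1 ≤ p, q, r ≤ ∞ with 1/p + 1/q = 1/r. -/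

import Mathlib

open scoped ENNReal NNReal BigOperators

noncomputable section

/-- The integer lattice `ℤ^d`. -/
abbrev Zd (d : ℕ) := Fin d → ℤ

/-- Euclidean norm `|j|` of an integer vector `j ∈ ℤ^d`. -/
def znorm {d : ℕ} (j : Zd d) : ℝ := Real.sqrt (∑ i, ((j i : ℝ)) ^ 2)

/-- Euclidean norm of a real vector. -/
def rnorm {d : ℕ} (x : Fin d → ℝ) : ℝ := Real.sqrt (∑ i, (x i) ^ 2)

/-- Japanese bracket `⟨x⟩ = (1 + x²)^{1/2}`. -/
def jb (x : ℝ) : ℝ := Real.sqrt (1 + x ^ 2)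

/-- The discrete bilinear operator `𝒯_Θ` (named `Tbil` here) associated with an infinite tensor `Θ`:
`(𝒯_Θ(f,g))_j = Σ_k Σ_ℓ Θ(j,k,ℓ) f_k g_ℓ`. -/
def Tbil {d : ℕ} (Θ : Zd d → Zd d → Zd d → ℂ) (f g : Zd d → ℂ) : Zd d → ℂ :=
  fun j => ∑' k, ∑' l, Θ j k l * f k * g l

/-- `ℓ^p`-type norm (extended-real valued) of a family of nonnegative extended reals,
with the usual modification (supremum) when `p = ∞`. -/
def nestNorm {ι : Type*} (p : ℝ≥0∞) (F : ι → ℝ≥0∞) : ℝ≥0∞ :=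
  if p = ∞ then ⨆ i, F i else (∑' i, F i ^ p.toReal) ^ (1 / p.toReal)

/-- The weighted `ℓ^p_s(ℤ^d)` norm `(Σ_k ⟨k⟩^{sp} |f_k|^p)^{1/p}`. -/
def wlpNorm {d : ℕ} (p : ℝ≥0∞) (s : ℝ) (f : Zd d → ℂ) : ℝ≥0∞ :=
  nestNorm p fun k => ENNReal.ofReal (jb (znorm k) ^ s * ‖f k‖)

/-- The `ℓ^p(ℤ^d)` norm. -/
def lpNorm {d : ℕ} (p : ℝ≥0∞) (f : Zd d → ℂ) : ℝ≥0∞ :=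
  nestNorm p fun k => ENNReal.ofReal ‖f k‖

/-- The tensor norm `‖Θ‖_{ω,N} = sup_{j,k,ℓ} |Θ(j,k,ℓ)| ⟨|j−k|+|j−ℓ|⟩^{2N} /
(⟨|j|+|k|⟩^ω ⟨|j|+|ℓ|⟩^ω)`. -/
def tensorNorm {d : ℕ} (ω N : ℝ) (Θ : Zd d → Zd d → Zd d → ℂ) : ℝ≥0∞ :=
  ⨆ j, ⨆ k, ⨆ l, ENNReal.ofReal
    (‖Θ j k l‖ * jb (znorm (j - k) + znorm (j - l)) ^ (2 * N) /
      (jb (znorm j + znorm k) ^ ω * jb (znorm j + znorm l) ^ ω))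

/-- The tensor norm `‖Θ‖_{ω₁,ω₂,N}`. -/
def tensorNorm2 {d : ℕ} (ω₁ ω₂ N : ℝ) (Θ : Zd d → Zd d → Zd d → ℂ) : ℝ≥0∞ :=
  ⨆ j, ⨆ k, ⨆ l, ENNReal.ofReal
    (‖Θ j k l‖ * jb (znorm (j - k) + znorm (j - l)) ^ (2 * N) /
      (jb (znorm j + znorm k) ^ ω₁ * jb (znorm j + znorm l) ^ ω₂))

/-- The tensor norm `‖Θ‖_{0,0,ω,N} = sup_{j,k,ℓ} |Θ(j,k,ℓ)| ⟨|j−k|+|j−ℓ|⟩^{2N} /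
⟨|j|+|k|+|ℓ|⟩^ω`. -/
def tensorNorm00 {d : ℕ} (ω N : ℝ) (Θ : Zd d → Zd d → Zd d → ℂ) : ℝ≥0∞ :=
  ⨆ j, ⨆ k, ⨆ l, ENNReal.ofReal
    (‖Θ j k l‖ * jb (znorm (j - k) + znorm (j - l)) ^ (2 * N) /
      jb (znorm j + znorm k + znorm l) ^ ω)

/-- The first bilinear commutator `[𝒯_Θ, b]₁(f,g) = 𝒯_Θ(bf, g) − b·𝒯_Θ(f,g)`. -/
def comm1 {d : ℕ} (Θ : Zd d → Zd d → Zd d → ℂ) (b f g : Zd d → ℂ) : Zd d → ℂ :=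
  fun j => Tbil Θ (fun k => b k * f k) g j - b j * Tbil Θ f g j

/-- The second bilinear commutator `[𝒯_Θ, b]₂(f,g) = 𝒯_Θ(f, bg) − b·𝒯_Θ(f,g)`. -/
def comm2 {d : ℕ} (Θ : Zd d → Zd d → Zd d → ℂ) (b f g : Zd d → ℂ) : Zd d → ℂ :=
  fun j => Tbil Θ f (fun l => b l * g l) j - b j * Tbil Θ f g j

/-- One-step finite difference in the variables `(j,k)`, with shift `v ∈ ℤ^d`:
`(D2 v Θ)(j,k,ℓ) = Θ(j+v, k+v, ℓ) − Θ(j,k,ℓ)`. -/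
def D2 {d : ℕ} (v : Zd d) (Θ : Zd d → Zd d → Zd d → ℂ) : Zd d → Zd d → Zd d → ℂ :=
  fun j k l => Θ (j + v) (k + v) l - Θ j k l

/-- One-step finite difference in the variables `(j,ℓ)`, with shift `v ∈ ℤ^d`:
`(D3 v Θ)(j,k,ℓ) = Θ(j+v, k, ℓ+v) − Θ(j,k,ℓ)`. -/
def D3 {d : ℕ} (v : Zd d) (Θ : Zd d → Zd d → Zd d → ℂ) : Zd d → Zd d → Zd d → ℂ :=
  fun j k l => Θ (j + v) k (l + v) - Θ j k l

/-- The iterated partial finite difference operator `Δ₂^α` for `α ∈ ℤ^d`: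
in direction `m`, `Δ_{2,m}^t = (Δ₂^{m, sign t})^{|t|}`. -/
def Delta2 {d : ℕ} (α : Zd d) (Θ : Zd d → Zd d → Zd d → ℂ) : Zd d → Zd d → Zd d → ℂ :=
  (List.finRange d).foldr
    (fun m F => (D2 (Pi.single m (Int.sign (α m))))^[(α m).natAbs] ∘ F) id Θ

/-- The iterated partial finite difference operator `Δ₃^β` for `β ∈ ℤ^d`. -/
def Delta3 {d : ℕ} (β : Zd d) (Θ : Zd d → Zd d → Zd d → ℂ) : Zd d → Zd d → Zd d → ℂ :=
  (List.finRange d).foldr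
    (fun m F => (D3 (Pi.single m (Int.sign (β m))))^[(β m).natAbs] ∘ F) id Θ

/-- `|α| = Σ_m |α_m|` for `α ∈ ℤ^d`. -/
def l1norm {d : ℕ} (α : Zd d) : ℝ := ∑ m, |(α m : ℝ)|

/-- The bilinear tensor class `BT^{ω,N}(ℤ^d)`:
`|Δ₂^α Δ₃^β Θ(j,k,ℓ)| ≤ C_{N,α,β} ⟨|j|+|k|+|ℓ|⟩^{ω−|α|−|β|} ⟨|j−k|+|j−ℓ|⟩^{−2N}`. -/
def BT {d : ℕ} (ω : ℝ) (N : ℕ) (Θ : Zd d → Zd d → Zd d → ℂ) : Prop :=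
  ∀ α β : Zd d, ∃ C : ℝ, 0 < C ∧ ∀ j k l : Zd d,
    ‖Delta2 α (Delta3 β Θ) j k l‖ ≤
      C * jb (znorm j + znorm k + znorm l) ^ (ω - l1norm α - l1norm β) *
        jb (znorm (j - k) + znorm (j - l)) ^ (-(2 * (N : ℝ)))

/-- The bilinear tensor class of order zero, `BT^0(ℤ^d) = ∪_{N > d} BT^{0,N}(ℤ^d)`. -/
def BT0 {d : ℕ} (Θ : Zd d → Zd d → Zd d → ℂ) : Prop :=
  ∃ N : ℕ, d < N ∧ BT 0 N Θ

/-- Directional derivative of a function on `ℝ^d × ℝ^d` in the direction `v`. -/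
def pDeriv {d : ℕ} (v : (Fin d → ℝ) × (Fin d → ℝ))
    (F : (Fin d → ℝ) × (Fin d → ℝ) → ℂ) : (Fin d → ℝ) × (Fin d → ℝ) → ℂ :=
  fun p => fderiv ℝ F p v

/-- Iterated partial derivative `∂_x^α` in the first group of variables. -/
def pdx {d : ℕ} (α : Fin d → ℕ) :
    ((Fin d → ℝ) × (Fin d → ℝ) → ℂ) → (Fin d → ℝ) × (Fin d → ℝ) → ℂ :=
  (List.finRange d).foldr (fun m G => (pDeriv (Pi.single m 1, 0))^[α m] ∘ G) id

/-- Iterated partial derivative `∂_y^β` in the second group of variables. -/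
def pdy {d : ℕ} (β : Fin d → ℕ) :
    ((Fin d → ℝ) × (Fin d → ℝ) → ℂ) → (Fin d → ℝ) × (Fin d → ℝ) → ℂ :=
  (List.finRange d).foldr (fun m G => (pDeriv (0, Pi.single m 1))^[β m] ∘ G) id

/-!
Weight the output by `⟨j⟩^(s₁+s₂)`. Peetre's inequality `⟨j⟩^a ≲ ⟨k⟩^a ⟨j-k⟩^|a|` moves the
weights `⟨j⟩^s₁ ⟨|j|+|k|⟩^ω₁` and `⟨j⟩^s₂ ⟨|j|+|ℓ|⟩^ω₂` of the tensor onto `⟨k⟩^(s₁+ω₁)` and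
`⟨ℓ⟩^(s₂+ω₂)`, at the price of the powers `A₁ = |s₁+ω₁| + max ω₁ 0` of `⟨j-k⟩` and `A₂` of
`⟨j-ℓ⟩`. The decay `⟨|j-k|+|j-ℓ|⟩^(-2N)` of `Θ` pays for both and leaves `⟨j-k⟩^(-u) ⟨j-ℓ⟩^(-u)`
with `u = N - (A₁+A₂)/2 > d`, so the weighted output is dominated pointwise by the product of the
convolutions of the weighted inputs with the summable kernel `⟨m⟩^(-u)`. Hölder's inequality for
`1/p + 1/q = 1/r` and Young's inequality `ℓ¹ ∗ ℓᵖ ⊆ ℓᵖ` conclude.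
-/

lemma rpow_le_of_le_mul_mul {c J K D : ℝ} (hc : 0 < c) (hJ : 0 < J) (hK : 0 < K) (hD : 0 < D)
    (hJK : J ≤ c * K * D) (hKJ : K ≤ c * J * D) (a : ℝ) :
    J ^ a ≤ c ^ |a| * K ^ a * D ^ |a| := by
  rcases le_or_gt 0 a with ha | ha
  · rw [abs_of_nonneg ha, ← Real.mul_rpow (by positivity) hK.le,
      ← Real.mul_rpow (by positivity) hD.le]
    exact Real.rpow_le_rpow hJ.le hJK ha
  · have hKa : K ^ (-a) ≤ c ^ (-a) * J ^ (-a) * D ^ (-a) := by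
      rw [← Real.mul_rpow hc.le hJ.le, ← Real.mul_rpow (by positivity) hD.le]
      exact Real.rpow_le_rpow hK.le hKJ (by linarith)
    rw [Real.rpow_neg hJ.le a, Real.rpow_neg hK.le a] at hKa
    have hJpos : 0 < J ^ a := by positivity
    have hKpos : 0 < K ^ a := by positivity
    rw [abs_of_neg ha]
    calc J ^ a = J ^ a * K ^ a * (K ^ a)⁻¹ := by field_simp
      _ ≤ J ^ a * K ^ a * (c ^ (-a) * (J ^ a)⁻¹ * D ^ (-a)) := by gcongr
      _ = c ^ (-a) * K ^ a * D ^ (-a) := by field_simp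

lemma jb_pos (x : ℝ) : 0 < jb x := Real.sqrt_pos.2 (by positivity)

lemma jb_le_jb {x y : ℝ} (hx : 0 ≤ x) (hxy : x ≤ y) : jb x ≤ jb y :=
  Real.sqrt_le_sqrt (by nlinarith)

lemma jb_rpow_neg_add_le {x y a b : ℝ} (hx : 0 ≤ x) (hy : 0 ≤ y) (ha : 0 ≤ a) (hb : 0 ≤ b) :
    jb (x + y) ^ (-(a + b)) ≤ jb x ^ (-a) * jb y ^ (-b) := by
  rw [neg_add, Real.rpow_add (jb_pos _)]
  exact mul_le_mul
    (Real.rpow_le_rpow_of_nonpos (jb_pos _) (jb_le_jb hx (by linarith)) (by linarith))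
    (Real.rpow_le_rpow_of_nonpos (jb_pos _) (jb_le_jb hy (by linarith)) (by linarith))
    (Real.rpow_nonneg (jb_pos _).le _) (Real.rpow_nonneg (jb_pos _).le _)

lemma jb_le_four_mul_jb_mul_jb {x y z : ℝ} (hx : 0 ≤ x) (hxyz : x ≤ 2 * y + z) :
    jb x ≤ 4 * jb y * jb z := by
  rw [jb, jb, jb, show (4 : ℝ) = Real.sqrt 16 by rw [show (16 : ℝ) = 4 ^ 2 by norm_num,
    Real.sqrt_sq zero_le_four], ← Real.sqrt_mul (by norm_num), ← Real.sqrt_mul (by positivity)]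
  refine Real.sqrt_le_sqrt ?_
  nlinarith [sq_nonneg (2 * z - y), sq_nonneg (y * z), mul_self_le_mul_self hx hxyz]

lemma ENNReal.tsum_pi_prod {α : Type*} (d : ℕ) (φ : α → ℝ≥0∞) :
    ∑' m : Fin d → α, ∏ i, φ (m i) = (∑' a, φ a) ^ d := by
  induction d with
  | zero => simp
  | succ n ih =>
    rw [← (Fin.consEquiv fun _ : Fin (n + 1) => α).tsum_eq, ENNReal.tsum_prod', pow_succ',
      ← ih, ← ENNReal.tsum_mul_right]
    refine tsum_congr fun a => ?_
    rw [← ENNReal.tsum_mul_left]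
    refine tsum_congr fun v => ?_
    simp [Fin.consEquiv, Fin.prod_univ_succ]

lemma summable_jb_abs_int_rpow_neg {v : ℝ} (hv : 1 < v) :
    Summable fun n : ℤ => jb |(n : ℝ)| ^ (-v) := by
  refine (Real.summable_abs_int_rpow hv).of_norm_bounded_eventually ?_
  filter_upwards [Set.Finite.compl_mem_cofinite (Set.finite_singleton (0 : ℤ))] with n hn
  have hn : 0 < |(n : ℝ)| := by simpa using hn
  rw [Real.norm_of_nonneg (Real.rpow_nonneg (jb_pos _).le _)]
  refine Real.rpow_le_rpow_of_nonpos hn ?_ (by linarith)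
  exact (Real.le_sqrt_of_sq_le (by linarith)).trans_eq rfl

section LatticeNorm

variable {d : ℕ}

lemma znorm_eq_norm (j : Zd d) : znorm j = ‖WithLp.toLp 2 (fun i => (j i : ℝ))‖ := by
  simp [znorm, EuclideanSpace.norm_eq]

lemma znorm_nonneg (j : Zd d) : 0 ≤ znorm j := Real.sqrt_nonneg _

lemma znorm_sub_comm (j k : Zd d) : znorm (j - k) = znorm (k - j) := by
  simp only [znorm_eq_norm, Pi.sub_apply, Int.cast_sub]
  rw [← norm_neg]
  congr 1
  ext i
  simp

lemma znorm_le_add_sub (j k : Zd d) : znorm j ≤ znorm k + znorm (j - k) := by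
  simp only [znorm_eq_norm, Pi.sub_apply, Int.cast_sub]
  exact norm_le_norm_add_norm_sub' _ (WithLp.toLp 2 fun i => (k i : ℝ))

lemma abs_le_znorm (m : Zd d) (i : Fin d) : |(m i : ℝ)| ≤ znorm m := by
  simpa [znorm_eq_norm] using PiLp.norm_apply_le (WithLp.toLp 2 (fun i => (m i : ℝ))) i

lemma jb_znorm_rpow_le (a : ℝ) (j k : Zd d) :
    jb (znorm j) ^ a ≤ 4 ^ |a| * jb (znorm k) ^ a * jb (znorm (j - k)) ^ |a| := by
  refine rpow_le_of_le_mul_mul four_pos (jb_pos _) (jb_pos _) (jb_pos _) ?_ ?_ a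
  · exact jb_le_four_mul_jb_mul_jb (znorm_nonneg _)
      (by linarith [znorm_le_add_sub j k, znorm_nonneg k])
  · exact jb_le_four_mul_jb_mul_jb (znorm_nonneg _)
      (by linarith [znorm_le_add_sub k j, znorm_sub_comm j k, znorm_nonneg j])

lemma jb_znorm_add_znorm_rpow_le (ω : ℝ) (j k : Zd d) :
    jb (znorm j + znorm k) ^ ω ≤
      4 ^ max ω 0 * jb (znorm j) ^ ω * jb (znorm (j - k)) ^ max ω 0 := by
  have := jb_pos (znorm j)
  have := jb_pos (znorm (j - k))
  rcases le_total 0 ω with hω | hω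
  · rw [max_eq_left hω, ← Real.mul_rpow (by positivity) (by positivity),
      ← Real.mul_rpow (by positivity) (by positivity)]
    refine Real.rpow_le_rpow (jb_pos _).le (jb_le_four_mul_jb_mul_jb ?_ ?_) hω
    · linarith [znorm_nonneg j, znorm_nonneg k]
    · linarith [znorm_le_add_sub k j, znorm_sub_comm j k]
  · rw [max_eq_right hω, Real.rpow_zero, Real.rpow_zero, one_mul, mul_one]
    exact Real.rpow_le_rpow_of_nonpos (jb_pos _)
      (jb_le_jb (znorm_nonneg _) (le_add_of_nonneg_right (znorm_nonneg _))) hω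

lemma jb_znorm_rpow_mul_jb_add_rpow_le (s ω : ℝ) (j k : Zd d) :
    jb (znorm j) ^ s * jb (znorm j + znorm k) ^ ω ≤
      4 ^ (|s + ω| + max ω 0) * jb (znorm k) ^ (s + ω) *
        jb (znorm (j - k)) ^ (|s + ω| + max ω 0) := by
  have := jb_pos (znorm j)
  have := jb_pos (znorm k)
  have := jb_pos (znorm (j - k))
  calc jb (znorm j) ^ s * jb (znorm j + znorm k) ^ ω
      ≤ jb (znorm j) ^ s *
          (4 ^ max ω 0 * jb (znorm j) ^ ω * jb (znorm (j - k)) ^ max ω 0) := by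
        gcongr
        exact jb_znorm_add_znorm_rpow_le ω j k
    _ = 4 ^ max ω 0 * jb (znorm j) ^ (s + ω) * jb (znorm (j - k)) ^ max ω 0 := by
        rw [Real.rpow_add (jb_pos _)]; ring
    _ ≤ 4 ^ max ω 0 * (4 ^ |s + ω| * jb (znorm k) ^ (s + ω) *
          jb (znorm (j - k)) ^ |s + ω|) * jb (znorm (j - k)) ^ max ω 0 := by
        gcongr
        exact jb_znorm_rpow_le (s + ω) j k
    _ = _ := by
        rw [Real.rpow_add four_pos, Real.rpow_add (jb_pos (znorm (j - k)))]; ring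

lemma tsum_ofReal_jb_znorm_rpow_neg_ne_top (hd : 1 ≤ d) {u : ℝ} (hu : (d : ℝ) < u) :
    ∑' m : Zd d, ENNReal.ofReal (jb (znorm m) ^ (-u)) ≠ ∞ := by
  have hd0 : (0 : ℝ) < d := by exact_mod_cast hd
  obtain ⟨v, hv, hvu⟩ : ∃ v, 1 < v ∧ v * d = u :=
    ⟨u / d, by rwa [lt_div_iff₀ hd0, one_mul], div_mul_cancel₀ u hd0.ne'⟩
  have hprod : ∀ m : Zd d, ENNReal.ofReal (jb (znorm m) ^ (-u)) ≤
      ∏ i, ENNReal.ofReal (jb |(m i : ℝ)| ^ (-v)) := fun m => by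
    rw [← ENNReal.ofReal_prod_of_nonneg fun i _ => Real.rpow_nonneg (jb_pos _).le _]
    refine ENNReal.ofReal_le_ofReal ?_
    calc jb (znorm m) ^ (-u) = ∏ _i : Fin d, jb (znorm m) ^ (-v) := by
          rw [Finset.prod_const, Finset.card_fin, ← Real.rpow_mul_natCast (jb_pos _).le, neg_mul,
            hvu]
      _ ≤ ∏ i, jb |(m i : ℝ)| ^ (-v) :=
          Finset.prod_le_prod (fun i _ => Real.rpow_nonneg (jb_pos _).le _) fun i _ =>
            Real.rpow_le_rpow_of_nonpos (jb_pos _) (jb_le_jb (abs_nonneg _) (abs_le_znorm m i))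
              (by linarith)
  refine ne_top_of_le_ne_top ?_ ((ENNReal.tsum_le_tsum hprod).trans_eq
    (ENNReal.tsum_pi_prod d fun n : ℤ => ENNReal.ofReal (jb |(n : ℝ)| ^ (-v))))
  rw [← ENNReal.ofReal_tsum_of_nonneg (fun n => Real.rpow_nonneg (jb_pos _).le _)
    (summable_jb_abs_int_rpow_neg hv)]
  exact ENNReal.pow_ne_top ENNReal.ofReal_ne_top

end LatticeNorm

section SequenceNorm

variable {ι : Type*}

lemma ENNReal.tsum_mul_le_Lp_mul_Lq (F G : ι → ℝ≥0∞) {a b : ℝ}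
    (hab : a.HolderConjugate b) :
    ∑' i, F i * G i ≤ (∑' i, F i ^ a) ^ (1 / a) * (∑' i, G i ^ b) ^ (1 / b) := by
  let _ : MeasurableSpace ι := ⊤
  simpa [MeasureTheory.lintegral_count] using ENNReal.lintegral_mul_le_Lp_mul_Lq
    (.count : MeasureTheory.Measure ι) hab measurable_from_top.aemeasurable
    measurable_from_top.aemeasurable

lemma ENNReal.tsum_Lp_mul_le_Lq_mul_Lr (F G : ι → ℝ≥0∞) {a b c : ℝ} (ha : 0 < a) (hab : a < b)
    (habc : 1 / a = 1 / b + 1 / c) :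
    (∑' i, (F i * G i) ^ a) ^ (1 / a) ≤ (∑' i, F i ^ b) ^ (1 / b) * (∑' i, G i ^ c) ^ (1 / c) := by
  let _ : MeasurableSpace ι := ⊤
  simpa [MeasureTheory.lintegral_count] using ENNReal.lintegral_Lp_mul_le_Lq_mul_Lr ha hab habc
    (.count : MeasureTheory.Measure ι) measurable_from_top.aemeasurable
    measurable_from_top.aemeasurable

lemma nestNorm_mono (p : ℝ≥0∞) {F G : ι → ℝ≥0∞} (h : ∀ i, F i ≤ G i) :
    nestNorm p F ≤ nestNorm p G := by
  unfold nestNorm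
  split_ifs
  · exact iSup_mono h
  · gcongr with i
    exact h i

lemma nestNorm_const_mul {p : ℝ≥0∞} (hp : p ≠ 0) (c : ℝ≥0∞) (F : ι → ℝ≥0∞) :
    nestNorm p (fun i => c * F i) = c * nestNorm p F := by
  unfold nestNorm
  split_ifs with htop
  · exact (ENNReal.mul_iSup c F).symm
  · have ht : 0 < p.toReal := ENNReal.toReal_pos hp htop
    simp_rw [ENNReal.mul_rpow_of_nonneg _ _ ht.le, ENNReal.tsum_mul_left,
      ENNReal.mul_rpow_of_nonneg _ _ (one_div_nonneg.2 ht.le), ← ENNReal.rpow_mul,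
      mul_one_div_cancel ht.ne', ENNReal.rpow_one]

lemma nestNorm_top_mul_le (p : ℝ≥0∞) (hp : p ≠ 0) (F G : ι → ℝ≥0∞) :
    nestNorm p (fun i => F i * G i) ≤ nestNorm ∞ F * nestNorm p G := by
  rw [show nestNorm ∞ F = ⨆ i, F i from if_pos rfl, ← nestNorm_const_mul hp]
  exact nestNorm_mono p fun i => mul_le_mul_left (le_iSup F i) _

lemma nestNorm_mul_le {p q r : ℝ≥0∞} (hp : p ≠ 0) (hq : q ≠ 0) (hpqr : p⁻¹ + q⁻¹ = r⁻¹)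
    (F G : ι → ℝ≥0∞) :
    nestNorm r (fun i => F i * G i) ≤ nestNorm p F * nestNorm q G := by
  by_cases hpt : p = ∞
  · obtain rfl : q = r := by simpa [hpt] using hpqr
    subst hpt
    exact nestNorm_top_mul_le q hq F G
  by_cases hqt : q = ∞
  · obtain rfl : p = r := by simpa [hqt] using hpqr
    subst hqt
    simpa only [mul_comm] using nestNorm_top_mul_le p hp G F
  have hrt : r ≠ ∞ := by
    rintro rfl
    simp_all
  have hr : r ≠ 0 := by
    rintro rfl
    simp_all
  have hpqr' : 1 / r.toReal = 1 / p.toReal + 1 / q.toReal := by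
    have := congrArg ENNReal.toReal hpqr
    rwa [ENNReal.toReal_add (by simpa using hp) (by simpa using hq), ENNReal.toReal_inv,
      ENNReal.toReal_inv, ENNReal.toReal_inv, ← one_div, ← one_div, ← one_div, eq_comm] at this
  simp only [nestNorm, if_neg hpt, if_neg hqt, if_neg hrt]
  refine ENNReal.tsum_Lp_mul_le_Lq_mul_Lr F G (ENNReal.toReal_pos hr hrt) ?_ hpqr'
  have := one_div_pos.2 (ENNReal.toReal_pos hq hqt)
  exact lt_of_one_div_lt_one_div (ENNReal.toReal_pos hp hpt) (by linarith)

lemma ENNReal.rpow_tsum_mul_le (a x : ι → ℝ≥0∞) {t : ℝ} (ht : 1 ≤ t) :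
    (∑' i, a i * x i) ^ t ≤ (∑' i, a i) ^ (t - 1) * ∑' i, a i * x i ^ t := by
  rcases ht.eq_or_lt with rfl | ht
  · simp
  have ht0 : 0 < t := by linarith
  have hconj : (t / (t - 1)).HolderConjugate t := (Real.HolderConjugate.conjExponent ht).symm
  have hsplit : ∀ i, a i * x i = a i ^ ((t - 1) / t) * (a i ^ (1 / t) * x i) := fun i => by
    rw [← mul_assoc, ← ENNReal.rpow_add_of_nonneg _ _ (by positivity) (by positivity),
      show (t - 1) / t + 1 / t = 1 by field_simp; ring, ENNReal.rpow_one]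
  have hfirst : ∀ i, (a i ^ ((t - 1) / t)) ^ (t / (t - 1)) = a i := fun i => by
    rw [← ENNReal.rpow_mul, show (t - 1) / t * (t / (t - 1)) = 1 by field_simp, ENNReal.rpow_one]
  have hsecond : ∀ i, (a i ^ (1 / t) * x i) ^ t = a i * x i ^ t := fun i => by
    rw [ENNReal.mul_rpow_of_nonneg _ _ ht0.le, ← ENNReal.rpow_mul, one_div_mul_cancel ht0.ne',
      ENNReal.rpow_one]
  calc (∑' i, a i * x i) ^ t
      ≤ ((∑' i, a i) ^ ((t - 1) / t) * (∑' i, a i * x i ^ t) ^ (1 / t)) ^ t := by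
        gcongr
        have := ENNReal.tsum_mul_le_Lp_mul_Lq (fun i => a i ^ ((t - 1) / t))
          (fun i => a i ^ (1 / t) * x i) hconj
        simp only [hfirst, hsecond, one_div_div] at this
        rwa [tsum_congr hsplit]
    _ = (∑' i, a i) ^ (t - 1) * ∑' i, a i * x i ^ t := by
        rw [ENNReal.mul_rpow_of_nonneg _ _ ht0.le, ← ENNReal.rpow_mul, ← ENNReal.rpow_mul,
          div_mul_cancel₀ _ ht0.ne', one_div_mul_cancel ht0.ne', ENNReal.rpow_one]

lemma nestNorm_conv_le {γ : Type*} [AddCommGroup γ] {p : ℝ≥0∞} (hp : 1 ≤ p) (A F : γ → ℝ≥0∞) :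
    nestNorm p (fun j => ∑' k, A (j - k) * F k) ≤ (∑' m, A m) * nestNorm p F := by
  have hA : ∀ j, ∑' k, A (j - k) = ∑' m, A m := fun j => (Equiv.subLeft j).tsum_eq A
  have hA' : ∀ k, ∑' j, A (j - k) = ∑' m, A m := fun k => (Equiv.subRight k).tsum_eq A
  unfold nestNorm
  split_ifs with hpt
  · refine iSup_le fun j => ?_
    calc ∑' k, A (j - k) * F k ≤ ∑' k, A (j - k) * ⨆ i, F i := by
          gcongr with k
          exact le_iSup F k
      _ = (∑' m, A m) * ⨆ i, F i := by rw [ENNReal.tsum_mul_right, hA]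
  set t := p.toReal
  have ht : 1 ≤ t := by simpa using ENNReal.toReal_mono hpt hp
  have ht0 : 0 < t := by linarith
  set S := ∑' m, A m
  calc (∑' j, (∑' k, A (j - k) * F k) ^ t) ^ (1 / t)
      ≤ (∑' j, S ^ (t - 1) * ∑' k, A (j - k) * F k ^ t) ^ (1 / t) := by
        gcongr with j
        simpa only [hA] using ENNReal.rpow_tsum_mul_le (fun k => A (j - k)) F ht
    _ = (S ^ t * ∑' k, F k ^ t) ^ (1 / t) := by
        rw [ENNReal.tsum_mul_left, ENNReal.tsum_comm]
        simp only [ENNReal.tsum_mul_right, hA', ENNReal.tsum_mul_left, ← mul_assoc]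
        congr 2
        rw [show S ^ t = S ^ ((t - 1) + 1) by rw [sub_add_cancel],
          ENNReal.rpow_add_of_nonneg _ _ (by linarith) zero_le_one, ENNReal.rpow_one]
    _ = S * (∑' k, F k ^ t) ^ (1 / t) := by
        rw [ENNReal.mul_rpow_of_nonneg _ _ (by positivity), ← ENNReal.rpow_mul,
          mul_one_div_cancel ht0.ne', ENNReal.rpow_one]

end SequenceNorm

section TensorBound

variable {d : ℕ} {Θ : Zd d → Zd d → Zd d → ℂ}

lemma norm_le_tensorNorm2_mul {ω₁ ω₂ N : ℝ} (hΘ : tensorNorm2 ω₁ ω₂ N Θ ≠ ∞) (j k l : Zd d) :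
    ‖Θ j k l‖ ≤ (tensorNorm2 ω₁ ω₂ N Θ).toReal * jb (znorm j + znorm k) ^ ω₁ *
      jb (znorm j + znorm l) ^ ω₂ * jb (znorm (j - k) + znorm (j - l)) ^ (-(2 * N)) := by
  have := jb_pos (znorm j + znorm k)
  have := jb_pos (znorm j + znorm l)
  have := jb_pos (znorm (j - k) + znorm (j - l))
  have hle : ENNReal.ofReal (‖Θ j k l‖ * jb (znorm (j - k) + znorm (j - l)) ^ (2 * N) /
      (jb (znorm j + znorm k) ^ ω₁ * jb (znorm j + znorm l) ^ ω₂)) ≤ tensorNorm2 ω₁ ω₂ N Θ :=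
    le_iSup_of_le j (le_iSup_of_le k (le_iSup_of_le l le_rfl))
  rw [ENNReal.ofReal_le_iff_le_toReal hΘ, div_le_iff₀ (by positivity)] at hle
  rw [Real.rpow_neg (by positivity), ← div_eq_mul_inv, le_div_iff₀ (by positivity)]
  linarith

lemma exists_jb_rpow_mul_norm_le {s₁ s₂ ω₁ ω₂ N u : ℝ}
    (hΘ : tensorNorm2 ω₁ ω₂ N Θ ≠ ∞) (hu : 0 ≤ u)
    (hN : |s₁ + ω₁| + max ω₁ 0 + (|s₂ + ω₂| + max ω₂ 0) + 2 * u = 2 * N) :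
    ∃ C, 0 ≤ C ∧ ∀ j k l : Zd d, jb (znorm j) ^ (s₁ + s₂) * ‖Θ j k l‖ ≤
      C * (jb (znorm (j - k)) ^ (-u) * jb (znorm k) ^ (s₁ + ω₁)) *
        (jb (znorm (j - l)) ^ (-u) * jb (znorm l) ^ (s₂ + ω₂)) := by
  set A₁ := |s₁ + ω₁| + max ω₁ 0
  set A₂ := |s₂ + ω₂| + max ω₂ 0
  have hA₁ : 0 ≤ A₁ := add_nonneg (abs_nonneg _) (le_max_right _ _)
  have hA₂ : 0 ≤ A₂ := add_nonneg (abs_nonneg _) (le_max_right _ _)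
  refine ⟨(tensorNorm2 ω₁ ω₂ N Θ).toReal * 4 ^ A₁ * 4 ^ A₂, by positivity, fun j k l => ?_⟩
  have := jb_pos (znorm j)
  have := jb_pos (znorm k)
  have := jb_pos (znorm l)
  have := jb_pos (znorm (j - k))
  have := jb_pos (znorm (j - l))
  have := jb_pos (znorm j + znorm k)
  have := jb_pos (znorm j + znorm l)
  have := jb_pos (znorm (j - k) + znorm (j - l))
  have hdecay : jb (znorm (j - k) + znorm (j - l)) ^ (-(2 * N)) ≤
      jb (znorm (j - k)) ^ (-(A₁ + u)) * jb (znorm (j - l)) ^ (-(A₂ + u)) := by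
    rw [← hN, show A₁ + A₂ + 2 * u = (A₁ + u) + (A₂ + u) by ring]
    exact jb_rpow_neg_add_le (znorm_nonneg _) (znorm_nonneg _) (by linarith) (by linarith)
  calc jb (znorm j) ^ (s₁ + s₂) * ‖Θ j k l‖
      ≤ jb (znorm j) ^ s₁ * jb (znorm j) ^ s₂ * ((tensorNorm2 ω₁ ω₂ N Θ).toReal *
          jb (znorm j + znorm k) ^ ω₁ * jb (znorm j + znorm l) ^ ω₂ *
          jb (znorm (j - k) + znorm (j - l)) ^ (-(2 * N))) := by
        rw [Real.rpow_add (jb_pos _)]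
        gcongr
        exact norm_le_tensorNorm2_mul hΘ j k l
    _ = (tensorNorm2 ω₁ ω₂ N Θ).toReal *
          (jb (znorm j) ^ s₁ * jb (znorm j + znorm k) ^ ω₁) *
          (jb (znorm j) ^ s₂ * jb (znorm j + znorm l) ^ ω₂) *
          jb (znorm (j - k) + znorm (j - l)) ^ (-(2 * N)) := by ring
    _ ≤ (tensorNorm2 ω₁ ω₂ N Θ).toReal *
          (4 ^ A₁ * jb (znorm k) ^ (s₁ + ω₁) * jb (znorm (j - k)) ^ A₁) *
          (4 ^ A₂ * jb (znorm l) ^ (s₂ + ω₂) * jb (znorm (j - l)) ^ A₂) *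
          (jb (znorm (j - k)) ^ (-(A₁ + u)) * jb (znorm (j - l)) ^ (-(A₂ + u))) := by
        gcongr _ * ?_ * ?_ * ?_
        · exact jb_znorm_rpow_mul_jb_add_rpow_le s₁ ω₁ j k
        · exact jb_znorm_rpow_mul_jb_add_rpow_le s₂ ω₂ j l
    _ = _ := by
        have hcancel : ∀ {x : ℝ} (A : ℝ), 0 < x → x ^ A * x ^ (-(A + u)) = x ^ (-u) :=
          fun A hx => by rw [← Real.rpow_add hx]; ring_nf
        rw [← hcancel A₁ (jb_pos (znorm (j - k))), ← hcancel A₂ (jb_pos (znorm (j - l)))]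
        ring

lemma ofReal_mul_norm_Tbil_le {f g : Zd d → ℂ} {j : Zd d} {w C : ℝ} {K₁ K₂ : Zd d → ℝ}
    (hw : 0 ≤ w) (hC : 0 ≤ C) (hK₁ : ∀ k, 0 ≤ K₁ k)
    (hΘ : ∀ k l, w * ‖Θ j k l‖ ≤ C * K₁ k * K₂ l) :
    ENNReal.ofReal (w * ‖Tbil Θ f g j‖) ≤ ENNReal.ofReal C *
      (∑' k, ENNReal.ofReal (K₁ k * ‖f k‖)) * ∑' l, ENNReal.ofReal (K₂ l * ‖g l‖) := by
  have hterm : ∀ k l, ENNReal.ofReal w * ‖Θ j k l * f k * g l‖ₑ ≤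
      ENNReal.ofReal C * ENNReal.ofReal (K₁ k * ‖f k‖) * ENNReal.ofReal (K₂ l * ‖g l‖) := by
    intro k l
    simp only [← ofReal_norm, ← ENNReal.ofReal_mul hw, ← ENNReal.ofReal_mul hC,
      ← ENNReal.ofReal_mul (mul_nonneg hC (mul_nonneg (hK₁ k) (norm_nonneg _))), norm_mul]
    refine ENNReal.ofReal_le_ofReal ?_
    calc w * (‖Θ j k l‖ * ‖f k‖ * ‖g l‖) = w * ‖Θ j k l‖ * (‖f k‖ * ‖g l‖) := by ring
      _ ≤ C * K₁ k * K₂ l * (‖f k‖ * ‖g l‖) := mul_le_mul_of_nonneg_right (hΘ k l) (by positivity)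
      _ = _ := by ring
  calc ENNReal.ofReal (w * ‖Tbil Θ f g j‖) = ENNReal.ofReal w * ‖Tbil Θ f g j‖ₑ := by
        rw [ENNReal.ofReal_mul hw, ofReal_norm]
    _ ≤ ENNReal.ofReal w * ∑' k, ∑' l, ‖Θ j k l * f k * g l‖ₑ := by
        gcongr
        exact enorm_tsum_le_tsum_enorm.trans
          (ENNReal.tsum_le_tsum fun k => enorm_tsum_le_tsum_enorm)
    _ ≤ ∑' k, ∑' l, ENNReal.ofReal C * ENNReal.ofReal (K₁ k * ‖f k‖) *
          ENNReal.ofReal (K₂ l * ‖g l‖) := by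
        simp only [← ENNReal.tsum_mul_left]
        exact ENNReal.tsum_le_tsum fun k => ENNReal.tsum_le_tsum fun l => hterm k l
    _ = _ := by simp only [ENNReal.tsum_mul_left, ENNReal.tsum_mul_right]

lemma wlpNorm_Tbil_le_of_kernel_le {s t₁ t₂ u C : ℝ} (hC : 0 ≤ C)
    (hΘ : ∀ j k l, jb (znorm j) ^ s * ‖Θ j k l‖ ≤
      C * (jb (znorm (j - k)) ^ (-u) * jb (znorm k) ^ t₁) *
        (jb (znorm (j - l)) ^ (-u) * jb (znorm l) ^ t₂))
    {p q r : ℝ≥0∞} (hp : 1 ≤ p) (hq : 1 ≤ q) (hpqr : p⁻¹ + q⁻¹ = r⁻¹) (f g : Zd d → ℂ) :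
    wlpNorm r s (Tbil Θ f g) ≤ ENNReal.ofReal C *
      (∑' m : Zd d, ENNReal.ofReal (jb (znorm m) ^ (-u))) ^ 2 * wlpNorm p t₁ f *
        wlpNorm q t₂ g := by
  set A : Zd d → ℝ≥0∞ := fun m => ENNReal.ofReal (jb (znorm m) ^ (-u))
  set F : Zd d → ℝ≥0∞ := fun k => ENNReal.ofReal (jb (znorm k) ^ t₁ * ‖f k‖)
  set G : Zd d → ℝ≥0∞ := fun l => ENNReal.ofReal (jb (znorm l) ^ t₂ * ‖g l‖)
  have hpointwise : ∀ j, ENNReal.ofReal (jb (znorm j) ^ s * ‖Tbil Θ f g j‖) ≤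
      ENNReal.ofReal C * (∑' k, A (j - k) * F k) * ∑' l, A (j - l) * G l := fun j => by
    refine (ofReal_mul_norm_Tbil_le (Real.rpow_nonneg (jb_pos _).le _) hC
      (fun k => mul_nonneg (Real.rpow_nonneg (jb_pos _).le _) (Real.rpow_nonneg (jb_pos _).le _))
      (hΘ j)).trans_eq ?_
    simp only [mul_assoc, ENNReal.ofReal_mul (Real.rpow_nonneg (jb_pos _).le _), A, F, G]
  calc wlpNorm r s (Tbil Θ f g)
      ≤ nestNorm r fun j => (ENNReal.ofReal C * ∑' k, A (j - k) * F k) * ∑' l, A (j - l) * G l :=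
        nestNorm_mono r hpointwise
    _ ≤ ENNReal.ofReal C * nestNorm p (fun j => ∑' k, A (j - k) * F k) *
          nestNorm q (fun j => ∑' l, A (j - l) * G l) := by
        refine (nestNorm_mul_le (by positivity) (by positivity) hpqr _ _).trans_eq ?_
        rw [nestNorm_const_mul (by positivity)]
    _ ≤ ENNReal.ofReal C * ((∑' m, A m) * nestNorm p F) * ((∑' m, A m) * nestNorm q G) := by
        gcongr
        · exact nestNorm_conv_le hp A F
        · exact nestNorm_conv_le hq A G
    _ = ENNReal.ofReal C * (∑' m, A m) ^ 2 * nestNorm p F * nestNorm q G := by ring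

end TensorBound

theorem stmt_4_general {d : ℕ} (hd : 1 ≤ d) (s₁ s₂ ω₁ ω₂ N : ℝ)
    (Θ : Zd d → Zd d → Zd d → ℂ)
    (hΘ : tensorNorm2 ω₁ ω₂ N Θ ≠ ∞)
    (hN : N > (d : ℝ) + (max ω₁ 0 + max ω₂ 0) / 2 + (|s₁ + ω₁| + |s₂ + ω₂|) / 2)
    (p q r : ℝ≥0∞) (hp : 1 ≤ p) (hq : 1 ≤ q)
    (hpqr : p⁻¹ + q⁻¹ = r⁻¹) :
    ∃ C : ℝ, 0 < C ∧ ∀ f g : Zd d → ℂ,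
      wlpNorm r (s₁ + s₂) (Tbil Θ f g) ≤
        ENNReal.ofReal C * wlpNorm p (s₁ + ω₁) f * wlpNorm q (s₂ + ω₂) g := by
  set u := N - (|s₁ + ω₁| + max ω₁ 0 + (|s₂ + ω₂| + max ω₂ 0)) / 2
  have hu : (d : ℝ) < u := by simp only [u]; linarith
  obtain ⟨C, hC, hkernel⟩ :=
    exists_jb_rpow_mul_norm_le (u := u) hΘ ((Nat.cast_nonneg d).trans hu.le) (by ring)
  set S := ∑' m : Zd d, ENNReal.ofReal (jb (znorm m) ^ (-u))
  have hS : S ≠ ∞ := tsum_ofReal_jb_znorm_rpow_neg_ne_top hd hu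
  refine ⟨C * S.toReal ^ 2 + 1, by positivity, fun f g => ?_⟩
  refine (wlpNorm_Tbil_le_of_kernel_le hC hkernel hp hq hpqr f g).trans ?_
  have hconst : ENNReal.ofReal C * S ^ 2 ≤ ENNReal.ofReal (C * S.toReal ^ 2 + 1) := by
    rw [← ENNReal.ofReal_toReal hS, ← ENNReal.ofReal_pow ENNReal.toReal_nonneg,
      ← ENNReal.ofReal_mul hC, ENNReal.toReal_ofReal ENNReal.toReal_nonneg]
    exact ENNReal.ofReal_le_ofReal (by linarith)
  gcongr

/-- if `‖Θ‖_{ω₁,ω₂,N} < ∞` for some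
`N > d + (max(ω₁,0)+max(ω₂,0))/2 + (|s₁+ω₁|+|s₂+ω₂|)/2`, then
`𝒯_Θ : ℓ^p_{s₁+ω₁} × ℓ^q_{s₂+ω₂} → ℓ^r_{s₁+s₂}` is bounded. -/
theorem stmt_4 {d : ℕ} (hd : 1 ≤ d) (s₁ s₂ ω₁ ω₂ N : ℝ)
    (Θ : Zd d → Zd d → Zd d → ℂ)
    (hΘ : tensorNorm2 ω₁ ω₂ N Θ ≠ ∞)
    (hN : N > (d : ℝ) + (max ω₁ 0 + max ω₂ 0) / 2 + (|s₁ + ω₁| + |s₂ + ω₂|) / 2)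
    (p q r : ℝ≥0∞) (hp : 1 ≤ p) (hq : 1 ≤ q) (hr : 1 ≤ r)
    (hpqr : p⁻¹ + q⁻¹ = r⁻¹) :
    ∃ C : ℝ, 0 < C ∧ ∀ f g : Zd d → ℂ,
      wlpNorm r (s₁ + s₂) (Tbil Θ f g) ≤
        ENNReal.ofReal C * wlpNorm p (s₁ + ω₁) f * wlpNorm q (s₂ + ω₂) g :=
  stmt_4_general hd s₁ s₂ ω₁ ω₂ N Θ hΘ hN p q r hp hq hpqr
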